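/- arXiv:2507.09727 — 2 statements merged into one kernel-verified Lean document; each statement's English description precedes it below -/
import Mathlib

section
/- Let n, k be natural numbers with k ≥ 1, and let κ, μ : Fin n → ℝ satisfy κ_α · κ_β = μ_α · μ_β for all indices α ≠ β. Then |σ_{2k+1}(κ)| = |σ_{2k+1}(μ)|, i.e. each odd elementary symmetric function σ_{2k+1} with k ≥ 1 is determined up to sign by the pairwise products of distinct entries. -/
/-- The `m`-th elementary symmetric function of the family `κ : Fin n → ℝ`:
the sum over all `m`-element subsets `S` of `Fin n` of `∏ i ∈ S, κ i`. -/
noncomputable def esymmFun (n m : ℕ) (κ : Fin n → ℝ) : ℝ :=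
  ∑ S ∈ Finset.powersetCard m (Finset.univ : Finset (Fin n)), ∏ i ∈ S, κ i

/-!
If three entries of `κ` are nonzero, the pairwise products determine `κ` up to a global sign:
`κ a ^ 2 * (κ b * κ c) = (κ a * κ b) * (κ a * κ c)` recovers `κ a ^ 2 = μ a ^ 2`, and then
`κ i * κ a = μ i * μ a` forces `μ = ± κ`. Otherwise `κ`, and by symmetry `μ`, has at most two
nonzero entries, so every product over three or more indices vanishes.
-/

open Finset

section PairwiseProducts

variable {ι R : Type*} [CommRing R] [NoZeroDivisors R]

theorem eq_or_eq_neg_of_mul_eq_mul {κ μ : ι → R}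
    (h : ∀ i j, i ≠ j → κ i * κ j = μ i * μ j) {a b c : ι}
    (hab : a ≠ b) (hac : a ≠ c) (hbc : b ≠ c) (ha : κ a ≠ 0) (hb : κ b ≠ 0) (hc : κ c ≠ 0) :
    μ = κ ∨ μ = -κ := by
  have hsq : μ a ^ 2 = κ a ^ 2 := by
    refine mul_right_cancel₀ (mul_ne_zero hb hc) ?_
    calc μ a ^ 2 * (κ b * κ c) = (μ a * μ b) * (μ a * μ c) := by rw [h b c hbc]; ring
      _ = (κ a * κ b) * (κ a * κ c) := by rw [h a b hab, h a c hac]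
      _ = κ a ^ 2 * (κ b * κ c) := by ring
  have hsign : ∀ s : R, μ a = s * κ a → ∀ i, μ i = s * κ i := by
    intro s hs i
    rcases eq_or_ne i a with rfl | hia
    · exact hs
    have hs2 : s * s = 1 := by
      refine mul_right_cancel₀ (pow_ne_zero 2 ha) ?_
      rw [hs, mul_pow] at hsq
      linear_combination hsq
    refine mul_right_cancel₀ ha ?_
    calc μ i * κ a = μ i * (s * s * κ a) := by rw [hs2, one_mul]
      _ = s * (μ i * μ a) := by rw [hs]; ring
      _ = s * κ i * κ a := by rw [← h i a hia]; ring
  rcases sq_eq_sq_iff_eq_or_eq_neg.mp hsq with hpos | hneg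
  · exact .inl (funext fun i => by simpa using hsign 1 (by simpa using hpos) i)
  · exact .inr (funext fun i => by simpa using hsign (-1) (by simpa using hneg) i)

theorem eq_or_eq_neg_of_mul_eq_mul_of_two_lt_card [Fintype ι] [DecidableEq R] {κ μ : ι → R}
    (h : ∀ i j, i ≠ j → κ i * κ j = μ i * μ j) (hκ : 2 < #{i | κ i ≠ 0}) :
    μ = κ ∨ μ = -κ := by
  obtain ⟨a, ha, b, hb, c, hc, hab, hac, hbc⟩ := two_lt_card.mp hκ
  simp only [mem_filter, mem_univ, true_and] at ha hb hc
  exact eq_or_eq_neg_of_mul_eq_mul h hab hac hbc ha hb hc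

end PairwiseProducts

theorem esymmFun_eq_zero_of_card_lt {n m : ℕ} {f : Fin n → ℝ} (hf : #{i | f i ≠ 0} < m) :
    esymmFun n m f = 0 := by
  refine sum_eq_zero fun S hS => ?_
  rw [mem_powersetCard] at hS
  have hS_not_sub : ¬ S ⊆ ({i | f i ≠ 0} : Finset _) := fun hsub =>
    (card_le_card hsub).not_gt (hS.2 ▸ hf)
  obtain ⟨i, hiS, hi⟩ := not_subset.mp hS_not_sub
  exact prod_eq_zero hiS (by simpa using hi)

theorem esymmFun_neg (n m : ℕ) (f : Fin n → ℝ) :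
    esymmFun n m (-f) = (-1) ^ m * esymmFun n m f := by
  rw [esymmFun, esymmFun, mul_sum]
  refine sum_congr rfl fun S hS => ?_
  rw [← (mem_powersetCard.mp hS).2, ← prod_const, ← prod_mul_distrib]
  simp

theorem abs_esymmFun_neg (n m : ℕ) (f : Fin n → ℝ) :
    |esymmFun n m (-f)| = |esymmFun n m f| := by
  rw [esymmFun_neg, abs_mul, abs_pow, abs_neg, abs_one, one_pow, one_mul]

theorem stmt_4 (n k : ℕ) (hk : 1 ≤ k) (κ μ : Fin n → ℝ)
    (h : ∀ α β : Fin n, α ≠ β → κ α * κ β = μ α * μ β) :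
    |esymmFun n (2 * k + 1) κ| = |esymmFun n (2 * k + 1) μ| := by
  by_cases hκ : 2 < #{i | κ i ≠ 0}
  · rcases eq_or_eq_neg_of_mul_eq_mul_of_two_lt_card h hκ with rfl | rfl
    · rfl
    · exact (abs_esymmFun_neg _ _ _).symm
  by_cases hμ : 2 < #{i | μ i ≠ 0}
  · rcases eq_or_eq_neg_of_mul_eq_mul_of_two_lt_card (fun i j hij => (h i j hij).symm) hμ
      with rfl | rfl
    · rfl
    · exact abs_esymmFun_neg _ _ _
  rw [esymmFun_eq_zero_of_card_lt (by omega), esymmFun_eq_zero_of_card_lt (by omega)]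
end

section
/- Let n, k be natural numbers and let κ, μ : Fin n → ℝ satisfy κ_α · κ_β = μ_α · μ_β for all indices α ≠ β. If there exists a natural number k ≥ 1 with σ_{2k+1}(κ) ≠ 0, then for every natural number l, σ_{2l+1}(κ) · σ_{2k+1}(κ) = σ_{2l+1}(μ) · σ_{2k+1}(μ), and consequently σ_{2l+1}(κ) = (σ_{2l+1}(μ) · σ_{2k+1}(μ)) / σ_{2k+1}(κ). -/
section PairwiseProducts

variable {ι K : Type*} [Field K] {κ μ : ι → K}

/-- `μ a ^ 2 * (μ b * μ c) = (μ a * μ b) * (μ a * μ c)`, and likewise for `κ`. -/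
theorem sq_eq_sq_of_mul_eq_mul {a b c : ι} (hab : κ a * κ b = μ a * μ b)
    (hac : κ a * κ c = μ a * μ c) (hbc : κ b * κ c = μ b * μ c) (hκbc : κ b * κ c ≠ 0) :
    μ a ^ 2 = κ a ^ 2 := by
  refine mul_right_cancel₀ (hbc ▸ hκbc) ?_
  linear_combination (-(μ a * μ c)) * hab - (κ a * κ b) * hac + κ a ^ 2 * hbc

theorem eq_or_eq_neg_of_pairwise_mul_eq (h : ∀ α β, α ≠ β → κ α * κ β = μ α * μ β) {j : ι}
    (hj : κ j ≠ 0) (hsq : μ j ^ 2 = κ j ^ 2) : μ = κ ∨ μ = -κ := by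
  rcases sq_eq_sq_iff_eq_or_eq_neg.mp hsq with hμj | hμj
  · refine Or.inl (funext fun i => ?_)
    rcases eq_or_ne i j with rfl | hij
    · exact hμj
    · refine mul_right_cancel₀ hj ?_
      rw [h i j hij, hμj]
  · refine Or.inr (funext fun i => ?_)
    rcases eq_or_ne i j with rfl | hij
    · exact hμj
    · refine mul_right_cancel₀ hj ?_
      rw [Pi.neg_apply]
      linear_combination h i j hij + μ i * hμj

theorem eq_or_eq_neg_of_three_ne_zero (h : ∀ α β, α ≠ β → κ α * κ β = μ α * μ β) {a b c : ι}
    (hab : a ≠ b) (hac : a ≠ c) (hbc : b ≠ c) (ha : κ a ≠ 0) (hb : κ b ≠ 0) (hc : κ c ≠ 0) :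
    μ = κ ∨ μ = -κ :=
  eq_or_eq_neg_of_pairwise_mul_eq h ha <|
    sq_eq_sq_of_mul_eq_mul (h a b hab) (h a c hac) (h b c hbc) (mul_ne_zero hb hc)

end PairwiseProducts

section ElementarySymmetric

variable {n m : ℕ} {κ : Fin n → ℝ}

theorem esymmFun_neg_of_odd (hm : Odd m) (κ : Fin n → ℝ) :
    esymmFun n m (-κ) = -esymmFun n m κ := by
  unfold esymmFun
  rw [← Finset.sum_neg_distrib]
  refine Finset.sum_congr rfl fun S hS => ?_
  rw [Pi.neg_def, Finset.prod_neg, (Finset.mem_powersetCard.mp hS).2, hm.neg_one_pow, neg_one_mul]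

theorem exists_card_eq_forall_ne_zero_of_esymmFun_ne_zero (h : esymmFun n m κ ≠ 0) :
    ∃ S : Finset (Fin n), S.card = m ∧ ∀ i ∈ S, κ i ≠ 0 := by
  obtain ⟨S, hS, hprod⟩ := Finset.exists_ne_zero_of_sum_ne_zero h
  exact ⟨S, (Finset.mem_powersetCard.mp hS).2, Finset.prod_ne_zero_iff.mp hprod⟩

theorem exists_three_ne_zero_of_esymmFun_ne_zero (hm : 3 ≤ m) (h : esymmFun n m κ ≠ 0) :
    ∃ a b c, a ≠ b ∧ a ≠ c ∧ b ≠ c ∧ κ a ≠ 0 ∧ κ b ≠ 0 ∧ κ c ≠ 0 := by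
  obtain ⟨S, hcard, hS⟩ := exists_card_eq_forall_ne_zero_of_esymmFun_ne_zero h
  obtain ⟨a, ha, b, hb, c, hc, hab, hac, hbc⟩ := Finset.two_lt_card.mp (by omega : 2 < S.card)
  exact ⟨a, b, c, hab, hac, hbc, hS a ha, hS b hb, hS c hc⟩

end ElementarySymmetric

theorem stmt_16 (n k : ℕ) (hk : 1 ≤ k) (κ μ : Fin n → ℝ)
    (h : ∀ α β : Fin n, α ≠ β → κ α * κ β = μ α * μ β)
    (hne : esymmFun n (2 * k + 1) κ ≠ 0) :
    ∀ l : ℕ,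
      esymmFun n (2 * l + 1) κ * esymmFun n (2 * k + 1) κ =
        esymmFun n (2 * l + 1) μ * esymmFun n (2 * k + 1) μ ∧
      esymmFun n (2 * l + 1) κ =
        esymmFun n (2 * l + 1) μ * esymmFun n (2 * k + 1) μ / esymmFun n (2 * k + 1) κ := by
  intro l
  obtain ⟨a, b, c, hab, hac, hbc, ha, hb, hc⟩ :=
    exists_three_ne_zero_of_esymmFun_ne_zero (by omega) hne
  have key : esymmFun n (2 * l + 1) κ * esymmFun n (2 * k + 1) κ =
      esymmFun n (2 * l + 1) μ * esymmFun n (2 * k + 1) μ := by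
    rcases eq_or_eq_neg_of_three_ne_zero h hab hac hbc ha hb hc with rfl | rfl
    · rfl
    · rw [esymmFun_neg_of_odd (odd_two_mul_add_one l), esymmFun_neg_of_odd (odd_two_mul_add_one k),
        neg_mul_neg]
  exact ⟨key, by rw [← key, mul_div_cancel_right₀ _ hne]⟩
end
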